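/- Let F(t₁,t₂,t₃) = (1/2)t₁²t₃ + (1/2)t₁t₂² − (1/24)t₂⁴ + t₂·exp(t₃) on ℝ³ and define the Legendre-type transform t̂ : ℝ³ → ℝ³, t̂_α = ∂²F/∂t₃∂t_α, so that t̂(t₁,t₂,t₃) = (t₁, exp(t₃), t₂·exp(t₃)). Then: (i) the Jacobian determinant det(∂t̂_α/∂t_β) equals −exp(2t₃) at every point; and (ii) with G(t) = −(1/24)t₃ and Ĝ(s₁,s₂,s₃) = −(1/8)·log s₂ (defined for s₂ > 0), one has Ĝ(t̂(t)) = G(t) − (1/24)·log|det(∂t̂_α/∂t_β)| for all t ∈ ℝ³. -/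

import Mathlib

open Real

/-- Partial derivative of a function of `n` real variables in the `i`-th coordinate
direction. -/
noncomputable def pd {n : ℕ} (i : Fin n) (f : (Fin n → ℝ) → ℝ) : (Fin n → ℝ) → ℝ :=
  fun t => fderiv ℝ f t (Pi.single i 1)

/-- The Jacobian matrix `(∂Ψ^α/∂t^β)` of a map `Ψ : ℝⁿ → ℝⁿ` at the point `t`. -/
noncomputable def jacobian {n : ℕ} (Ψ : (Fin n → ℝ) → (Fin n → ℝ)) (t : Fin n → ℝ) :
    Matrix (Fin n) (Fin n) ℝ :=
  Matrix.of fun α β => pd β (fun s => Ψ s α) t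

/-- The prepotential of the Frobenius manifold `ℂ³/W̃⁽¹⁾(A₂)`:
`F = ½t₁²t₃ + ½t₁t₂² − (1/24)t₂⁴ + t₂ e^{t₃}`. -/
noncomputable def Fa2 : (Fin 3 → ℝ) → ℝ :=
  fun t => (1/2) * (t 0)^2 * t 2 + (1/2) * t 0 * (t 1)^2 - (1/24) * (t 1)^4
    + t 1 * Real.exp (t 2)

/-! The Jacobian of `t̂ = (t₁, e^{t₃}, t₂e^{t₃})` is `[[1,0,0],[0,0,e^{t₃}],[0,e^{t₃},t₂e^{t₃}]]`,
with determinant `−e^{2t₃}`; hence `−(1/24) log |det| = −t₃/12`, and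
`Ĝ(t̂) = −(1/8) t₃ = −t₃/24 − t₃/12`. -/

theorem fderiv_coord_apply {𝕜 ι : Type*} [NontriviallyNormedField 𝕜] [Fintype ι]
    (i : ι) (t v : ι → 𝕜) : fderiv 𝕜 (fun s : ι → 𝕜 => s i) t v = v i := by
  rw [(hasFDerivAt_apply i t).fderiv]
  rfl

theorem det_fin_three_of_swap_block {R : Type*} [CommRing R] (a b : R) :
    !![1, 0, 0; 0, 0, a; 0, a, b].det = -a ^ 2 := by
  simp [Matrix.det_fin_three, sq]

noncomputable def flatCoordsS3 (t : Fin 3 → ℝ) : Fin 3 → ℝ := fun α =>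
  if α = 0 then t 0 else if α = 1 then exp (t 2) else t 1 * exp (t 2)

theorem pd_Fa2 (α : Fin 3) : pd α Fa2 = fun t =>
    ![t 0 * t 2 + (1/2) * t 1 ^ 2, t 0 * t 1 - (1/6) * t 1 ^ 3 + exp (t 2),
      (1/2) * t 0 ^ 2 + t 1 * exp (t 2)] α := by
  ext t
  unfold pd Fa2
  fin_cases α <;>
    simp (disch := fun_prop) [fderiv_fun_add, fderiv_fun_sub, fderiv_fun_mul, fderiv_fun_pow,
      fderiv_exp, fderiv_coord_apply, Pi.single_apply] <;> ring

theorem pd_two_pd_Fa2 (t : Fin 3 → ℝ) (α : Fin 3) : pd 2 (pd α Fa2) t = flatCoordsS3 t α := by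
  rw [pd_Fa2]
  unfold pd flatCoordsS3
  fin_cases α <;>
    simp (disch := fun_prop) [fderiv_fun_add, fderiv_fun_sub, fderiv_fun_mul, fderiv_fun_pow,
      fderiv_exp, fderiv_coord_apply, Pi.single_apply]

theorem jacobian_flatCoordsS3 (t : Fin 3 → ℝ) : jacobian flatCoordsS3 t =
    !![1, 0, 0; 0, 0, exp (t 2); 0, exp (t 2), t 1 * exp (t 2)] := by
  ext α β
  unfold jacobian pd flatCoordsS3
  fin_cases α <;> fin_cases β <;>
    simp (disch := fun_prop) [fderiv_fun_mul, fderiv_exp, fderiv_coord_apply, Pi.single_apply]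

theorem det_jacobian_flatCoordsS3 (t : Fin 3 → ℝ) :
    (jacobian flatCoordsS3 t).det = -exp (2 * t 2) := by
  rw [jacobian_flatCoordsS3, det_fin_three_of_swap_block, sq, ← exp_add, two_mul]

/-- The transformation law `Ĝ = G − (1/24) log det(∂t̂/∂t)` of the `G`-function under
the Legendre-type symmetry `S₃`, verified for `ℂ³/W̃⁽¹⁾(A₂)`: the new flat coordinates
`t̂_α = ∂²F/∂t₃∂t_α` are `(t₁, e^{t₃}, t₂e^{t₃})`, the Jacobian determinant
`det(∂t̂_α/∂t_β)` equals `−e^{2t₃}`, and with `G = −t₃/24`, `Ĝ(s) = −(1/8) log s₂` one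
has `Ĝ(t̂(t)) = G(t) − (1/24) log |det(∂t̂/∂t)|` everywhere. -/
theorem G_transform_S3_tildeW1_A2
    (that : (Fin 3 → ℝ) → (Fin 3 → ℝ))
    (hthat : that = fun t => fun α =>
      if α = 0 then t 0 else if α = 1 then Real.exp (t 2) else t 1 * Real.exp (t 2))
    (G Ghat : (Fin 3 → ℝ) → ℝ)
    (hGdef : G = fun t => -(1/24) * t 2)
    (hGhat : Ghat = fun s => -(1/8) * Real.log (s 1)) :
    (∀ t : Fin 3 → ℝ, ∀ α : Fin 3, pd 2 (pd α Fa2) t = that t α) ∧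
    (∀ t : Fin 3 → ℝ, (jacobian that t).det = -Real.exp (2 * t 2)) ∧
    (∀ t : Fin 3 → ℝ,
      Ghat (that t) = G t - (1/24) * Real.log |(jacobian that t).det|) := by
  obtain rfl : that = flatCoordsS3 := hthat
  subst hGdef hGhat
  refine ⟨pd_two_pd_Fa2, det_jacobian_flatCoordsS3, fun t => ?_⟩
  simp [det_jacobian_flatCoordsS3, flatCoordsS3]
  ring
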